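/- arXiv:1605.00254 — 2 statements merged into one kernel-verified Lean document; each statement's English description precedes it below -/
import Mathlib

section
/- Let H be a group, ω a normalized 3-cocycle on H with multiplicative phase θ, X a subgroup of H, and B a subgroup of H such that x⁻¹bx ∈ B and xbx⁻¹ ∈ B for all x ∈ X, b ∈ B. Assume θ_j(b,x) = 1, θ_j(x,b) = 1, and θ_j(b,b′) = 1 for all j ∈ H, x ∈ X, b, b′ ∈ B. Then θ_j(xb, yc) = θ_j(x,y) for all j ∈ H, x, y ∈ X, and b, c ∈ B. -/
/-!
The phase `θ` of a 3-cocycle is a twisted 2-cocycle: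
`θ_g(xy,z) θ_g(x,y) = θ_{x⁻¹gx}(y,z) θ_g(x,yz)`. Whenever two of these four phases are trivial
the other two agree, so by the hypotheses an element of `B` can be moved across a bracket without
changing `θ`. As `X` normalises `B`, `xb · yc = x · y(y⁻¹by · c)`, and the factors from `B` are
stripped off one at a time.
-/

/-- The multiplicative phase `θ_g(x,y)` of a 3-cocycle `ω`. -/
noncomputable def theta {H : Type*} [Group H] (ω : H → H → H → ℂ) (g x y : H) : ℂ :=
  ω g x y * ω x y ((x * y)⁻¹ * g * (x * y)) / ω x (x⁻¹ * g * x) y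

def IsTwistedTwoCocycle {H M : Type*} [Group H] [Monoid M] (t : H → H → H → M) : Prop :=
  ∀ g x y z : H, t g (x * y) z * t g x y = t (x⁻¹ * g * x) y z * t g x (y * z)

theorem isTwistedTwoCocycle_theta {H : Type*} [Group H] {ω : H → H → H → ℂ}
    (hne : ∀ a b c : H, ω a b c ≠ 0)
    (hcoc : ∀ a b c d : H,
      ω a b c * ω a (b * c) d * ω b c d = ω (a * b) c d * ω a b (c * d)) :
    IsTwistedTwoCocycle (theta ω) := by
  intro g x y z
  have e₁ : x * (x⁻¹ * g * x) = g * x := by group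
  have e₂ : y * ((x * y)⁻¹ * g * (x * y)) = x⁻¹ * g * x * y := by group
  have e₃ : z * ((x * y * z)⁻¹ * g * (x * y * z)) = (x * y)⁻¹ * g * (x * y) * z := by group
  have e₄ : (y * z)⁻¹ * (x⁻¹ * g * x) * (y * z) = (x * y * z)⁻¹ * g * (x * y * z) := by group
  have e₅ : y⁻¹ * (x⁻¹ * g * x) * y = (x * y)⁻¹ * g * (x * y) := by group
  have e₆ : (x * (y * z))⁻¹ * g * (x * (y * z)) = (x * y * z)⁻¹ * g * (x * y * z) := by group
  have h₁ := hcoc g x y z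
  have h₂ := hcoc x (x⁻¹ * g * x) y z
  have h₃ := hcoc x y ((x * y)⁻¹ * g * (x * y)) z
  have h₄ := hcoc x y z ((x * y * z)⁻¹ * g * (x * y * z))
  rw [e₁] at h₂
  rw [e₂] at h₃
  rw [e₃] at h₄
  simp only [theta, e₄, e₅, e₆]
  set g₁ := x⁻¹ * g * x
  set g₂ := (x * y)⁻¹ * g * (x * y)
  set g₃ := (x * y * z)⁻¹ * g * (x * y * z)
  rw [div_mul_div_comm, div_mul_div_comm, div_eq_div_iff (by simp [hne]) (by simp [hne])]
  apply mul_left_cancel₀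
    (by simp [hne] : ω x y z * ω x (g₁ * y) z * ω (g * x) y z * ω x y (g₂ * z) ≠ 0)
  -- cleared of denominators, the identity is `h₁ * h₃` divided by `h₂ * h₄`
  linear_combination
    (ω (g * x) y z * ω x g₁ (y * z) * ω (x * y) z g₃ * ω x y (g₂ * z)) * congr($h₁ * $h₃) -
    (ω (g * x) y z * ω g x (y * z) * ω (x * y) g₂ z * ω x y (g₂ * z)) * congr($h₂ * $h₄)

namespace IsTwistedTwoCocycle

variable {H M : Type*} [Group H] [Monoid M] {t : H → H → H → M}

theorem apply_mul_left_eq (ht : IsTwistedTwoCocycle t) {g x y z : H}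
    (hxy : t g x y = 1) (hyz : t (x⁻¹ * g * x) y z = 1) :
    t g (x * y) z = t g x (y * z) := by
  simpa [hxy, hyz] using ht g x y z

theorem apply_mul_right_eq (ht : IsTwistedTwoCocycle t) {g x y z : H}
    (hxyz : t g (x * y) z = 1) (hyz : t (x⁻¹ * g * x) y z = 1) :
    t g x (y * z) = t g x y := by
  simpa [hxyz, hyz] using (ht g x y z).symm

variable {X B : Subgroup H}

theorem apply_mul_mem_eq_one (ht : IsTwistedTwoCocycle t)
    (hXB : ∀ j : H, ∀ x ∈ X, ∀ b ∈ B, t j x b = 1)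
    (hBB : ∀ j : H, ∀ b ∈ B, ∀ b' ∈ B, t j b b' = 1)
    {j y b c : H} (hy : y ∈ X) (hb : b ∈ B) (hc : c ∈ B) :
    t j (y * b) c = 1 := by
  rw [ht.apply_mul_left_eq (hXB j y hy b hb) (hBB _ b hb c hc)]
  exact hXB j y hy _ (mul_mem hb hc)

theorem apply_mem_mul_eq_one (ht : IsTwistedTwoCocycle t)
    (hconj : ∀ x ∈ X, ∀ b ∈ B, x⁻¹ * b * x ∈ B)
    (hBX : ∀ j : H, ∀ b ∈ B, ∀ x ∈ X, t j b x = 1)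
    (hXB : ∀ j : H, ∀ x ∈ X, ∀ b ∈ B, t j x b = 1)
    (hBB : ∀ j : H, ∀ b ∈ B, ∀ b' ∈ B, t j b b' = 1)
    {j b y c : H} (hb : b ∈ B) (hy : y ∈ X) (hc : c ∈ B) :
    t j b (y * c) = 1 := by
  rw [← ht.apply_mul_left_eq (hBX j b hb y hy) (hXB _ y hy c hc),
    show b * y = y * (y⁻¹ * b * y) by group]
  exact ht.apply_mul_mem_eq_one hXB hBB hy (hconj y hy b hb) hc

theorem apply_mul_mem_mul_mem (ht : IsTwistedTwoCocycle t)
    (hconj : ∀ x ∈ X, ∀ b ∈ B, x⁻¹ * b * x ∈ B)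
    (hBX : ∀ j : H, ∀ b ∈ B, ∀ x ∈ X, t j b x = 1)
    (hXB : ∀ j : H, ∀ x ∈ X, ∀ b ∈ B, t j x b = 1)
    (hBB : ∀ j : H, ∀ b ∈ B, ∀ b' ∈ B, t j b b' = 1)
    {j x y b c : H} (hx : x ∈ X) (hy : y ∈ X) (hb : b ∈ B) (hc : c ∈ B) :
    t j (x * b) (y * c) = t j x y := by
  have hb' : y⁻¹ * b * y * c ∈ B := mul_mem (hconj y hy b hb) hc
  rw [ht.apply_mul_left_eq (hXB j x hx b hb)
      (ht.apply_mem_mul_eq_one hconj hBX hXB hBB hb hy hc),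
    show b * (y * c) = y * (y⁻¹ * b * y * c) by group]
  exact ht.apply_mul_right_eq (hXB j _ (mul_mem hx hy) _ hb') (hXB _ y hy _ hb')

end IsTwistedTwoCocycle

theorem theta_quot_general {H : Type*} [Group H] (ω : H → H → H → ℂ)
    (habs : ∀ a b c : H, ‖ω a b c‖ = 1)
    (hcoc : ∀ a b c d : H,
      ω a b c * ω a (b * c) d * ω b c d = ω (a * b) c d * ω a b (c * d))
    (X B : Subgroup H)
    (hconj : ∀ x ∈ X, ∀ b ∈ B, x⁻¹ * b * x ∈ B ∧ x * b * x⁻¹ ∈ B)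
    (hBX : ∀ j : H, ∀ b ∈ B, ∀ x ∈ X, theta ω j b x = 1)
    (hXB : ∀ j : H, ∀ x ∈ X, ∀ b ∈ B, theta ω j x b = 1)
    (hBB : ∀ j : H, ∀ b ∈ B, ∀ b' ∈ B, theta ω j b b' = 1) :
    ∀ j : H, ∀ x ∈ X, ∀ y ∈ X, ∀ b ∈ B, ∀ c ∈ B,
      theta ω j (x * b) (y * c) = theta ω j x y := by
  have hne : ∀ a b c : H, ω a b c ≠ 0 := fun a b c ↦ norm_ne_zero_iff.mp (by simp [habs])
  intro j x hx y hy b hb c hc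
  exact (isTwistedTwoCocycle_theta hne hcoc).apply_mul_mem_mul_mem
    (fun x hx b hb ↦ (hconj x hx b hb).1) hBX hXB hBB hx hy hb hc

/-- Let `X` be a subgroup of `H` and `B` a subgroup of `H` closed under conjugation by
elements of `X`.  If the multiplicative phase `θ` of a normalized 3-cocycle `ω` is trivial
on `H × B × X`, `H × X × B` and `H × B × B`, then `θ_j(xb, yc) = θ_j(x,y)` for all `j ∈ H`,
`x, y ∈ X` and `b, c ∈ B`. -/
theorem theta_quot {H : Type*} [Group H] (ω : H → H → H → ℂ)
    (habs : ∀ a b c : H, ‖ω a b c‖ = 1)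
    (hcoc : ∀ a b c d : H,
      ω a b c * ω a (b * c) d * ω b c d = ω (a * b) c d * ω a b (c * d))
    (hnorm : ∀ g h : H, ω g 1 h = 1)
    (X B : Subgroup H)
    (hconj : ∀ x ∈ X, ∀ b ∈ B, x⁻¹ * b * x ∈ B ∧ x * b * x⁻¹ ∈ B)
    (hBX : ∀ j : H, ∀ b ∈ B, ∀ x ∈ X, theta ω j b x = 1)
    (hXB : ∀ j : H, ∀ x ∈ X, ∀ b ∈ B, theta ω j x b = 1)
    (hBB : ∀ j : H, ∀ b ∈ B, ∀ b' ∈ B, theta ω j b b' = 1) :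
    ∀ j : H, ∀ x ∈ X, ∀ y ∈ X, ∀ b ∈ B, ∀ c ∈ B,
      theta ω j (x * b) (y * c) = theta ω j x y :=
  theta_quot_general ω habs hcoc X B hconj hBX hXB hBB
end

section
/- Let H be a group, ω a normalized 3-cocycle on H with multiplicative phase θ, X a subgroup of H, and B a subgroup of H such that x⁻¹bx ∈ B and xbx⁻¹ ∈ B for all x ∈ X, b ∈ B. Assume θ_j(b,x) = 1, θ_j(x,b) = 1, and θ_j(b,b′) = 1 for all j ∈ H, x ∈ X, b, b′ ∈ B. Then θ_j(xb, c) = 1 and θ_j(b, yc) = 1 for all j ∈ H, x, y ∈ X, and b, c ∈ B. -/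
/-!
The phase satisfies the twisted 2-cocycle identity
`θ_g(x,y) θ_g(xy,z) = θ_g(x,yz) θ_{x⁻¹gx}(y,z)`. Taking `(x,y,z) = (x,b,c)` with `x ∈ X`,
`b, c ∈ B` kills every factor but `θ_g(xb,c)`. Taking `(x,y,z) = (b,y,c)` and writing
`by = y (y⁻¹by)` with `y⁻¹by ∈ B` reduces `θ_g(b,yc)` to the first case.
-/

section

variable {H : Type*} [Group H] {ω : H → H → H → ℂ}

def IsThreeCocycle (ω : H → H → H → ℂ) : Prop :=
  ∀ a b c d : H, ω a b c * ω a (b * c) d * ω b c d = ω (a * b) c d * ω a b (c * d)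

theorem theta_twisted_cocycle (hne : ∀ a b c : H, ω a b c ≠ 0) (hcoc : IsThreeCocycle ω)
    (g x y z : H) :
    theta ω g x y * theta ω g (x * y) z
      = theta ω g x (y * z) * theta ω (x⁻¹ * g * x) y z := by
  -- each cocycle relation is solved for the one factor of the left side that it eliminates
  have E1 : ω g (x * y) z = ω (g * x) y z * ω g x (y * z) / (ω g x y * ω x y z) := by
    rw [eq_div_iff (mul_ne_zero (hne _ _ _) (hne _ _ _)), ← hcoc]; ring
  have E2 : ω (x⁻¹ * g * x) y z = ω (g * x) y z * ω x (x⁻¹ * g * x) (y * z)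
      / (ω x (x⁻¹ * g * x) y * ω x (x⁻¹ * g * x * y) z) := by
    rw [eq_div_iff (mul_ne_zero (hne _ _ _) (hne _ _ _)),
      show g * x = x * (x⁻¹ * g * x) by group, ← hcoc]; ring
  have E3 : ω (x * y) ((x * y)⁻¹ * g * (x * y)) z
      = ω x y ((x * y)⁻¹ * g * (x * y)) * ω x (x⁻¹ * g * x * y) z
        * ω y ((x * y)⁻¹ * g * (x * y)) z / ω x y ((x * y)⁻¹ * g * (x * y) * z) := by
    rw [eq_div_iff (hne _ _ _),
      show x⁻¹ * g * x * y = y * ((x * y)⁻¹ * g * (x * y)) by group, hcoc]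
  have E4 : ω (x * y) z ((x * y * z)⁻¹ * g * (x * y * z))
      = ω x y z * ω x (y * z) ((x * y * z)⁻¹ * g * (x * y * z))
        * ω y z ((x * y * z)⁻¹ * g * (x * y * z)) / ω x y ((x * y)⁻¹ * g * (x * y) * z) := by
    rw [eq_div_iff (hne _ _ _),
      show (x * y)⁻¹ * g * (x * y) * z = z * ((x * y * z)⁻¹ * g * (x * y * z)) by group, hcoc]
  simp only [theta]
  rw [show (x * (y * z))⁻¹ * g * (x * (y * z)) = (x * y * z)⁻¹ * g * (x * y * z) by group,
    show (y * z)⁻¹ * (x⁻¹ * g * x) * (y * z) = (x * y * z)⁻¹ * g * (x * y * z) by group,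
    show y⁻¹ * (x⁻¹ * g * x) * y = (x * y)⁻¹ * g * (x * y) by group, E1, E2, E3, E4]
  field_simp [hne]

theorem theta_mul_left_eq_one (hne : ∀ a b c : H, ω a b c ≠ 0) (hcoc : IsThreeCocycle ω)
    {X B : Subgroup H}
    (hXB : ∀ j : H, ∀ x ∈ X, ∀ b ∈ B, theta ω j x b = 1)
    (hBB : ∀ j : H, ∀ b ∈ B, ∀ b' ∈ B, theta ω j b b' = 1)
    {j x b c : H} (hx : x ∈ X) (hb : b ∈ B) (hc : c ∈ B) :
    theta ω j (x * b) c = 1 := by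
  have h := theta_twisted_cocycle hne hcoc j x b c
  rwa [hXB j x hx b hb, hXB j x hx (b * c) (mul_mem hb hc), hBB _ b hb c hc,
    one_mul, one_mul] at h

theorem theta_mul_right_eq_one (hne : ∀ a b c : H, ω a b c ≠ 0) (hcoc : IsThreeCocycle ω)
    {X B : Subgroup H}
    (hconj : ∀ y ∈ X, ∀ b ∈ B, y⁻¹ * b * y ∈ B)
    (hBX : ∀ j : H, ∀ b ∈ B, ∀ x ∈ X, theta ω j b x = 1)
    (hXB : ∀ j : H, ∀ x ∈ X, ∀ b ∈ B, theta ω j x b = 1)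
    (hBB : ∀ j : H, ∀ b ∈ B, ∀ b' ∈ B, theta ω j b b' = 1)
    {j y b c : H} (hy : y ∈ X) (hb : b ∈ B) (hc : c ∈ B) :
    theta ω j b (y * c) = 1 := by
  have h := theta_twisted_cocycle hne hcoc j b y c
  rw [hBX j b hb y hy, hXB _ y hy c hc, one_mul, mul_one,
    show b * y = y * (y⁻¹ * b * y) by group,
    theta_mul_left_eq_one hne hcoc hXB hBB hy (hconj y hy b hb) hc] at h
  exact h.symm

end

theorem theta_quot_vanish_general {H : Type*} [Group H] (ω : H → H → H → ℂ)
    (habs : ∀ a b c : H, ‖ω a b c‖ = 1)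
    (hcoc : ∀ a b c d : H,
      ω a b c * ω a (b * c) d * ω b c d = ω (a * b) c d * ω a b (c * d))
    (X B : Subgroup H)
    (hconj : ∀ x ∈ X, ∀ b ∈ B, x⁻¹ * b * x ∈ B ∧ x * b * x⁻¹ ∈ B)
    (hBX : ∀ j : H, ∀ b ∈ B, ∀ x ∈ X, theta ω j b x = 1)
    (hXB : ∀ j : H, ∀ x ∈ X, ∀ b ∈ B, theta ω j x b = 1)
    (hBB : ∀ j : H, ∀ b ∈ B, ∀ b' ∈ B, theta ω j b b' = 1) :
    ∀ j : H, ∀ x ∈ X, ∀ y ∈ X, ∀ b ∈ B, ∀ c ∈ B,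
      theta ω j (x * b) c = 1 ∧ theta ω j b (y * c) = 1 := by
  have hne : ∀ a b c : H, ω a b c ≠ 0 := fun a b c ↦ norm_ne_zero_iff.mp (by simp [habs])
  intro j x hx y hy b hb c hc
  exact ⟨theta_mul_left_eq_one hne hcoc hXB hBB hx hb hc,
    theta_mul_right_eq_one hne hcoc (fun y hy b hb ↦ (hconj y hy b hb).1) hBX hXB hBB hy hb hc⟩

/-- Let `X` be a subgroup of `H` and `B` a subgroup of `H` closed under conjugation by
elements of `X`.  If the multiplicative phase `θ` of a normalized 3-cocycle `ω` is trivial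
on `H × B × X`, `H × X × B` and `H × B × B`, then `θ_j(xb, c) = 1` and `θ_j(b, yc) = 1` for all `j ∈ H`,
`x, y ∈ X` and `b, c ∈ B`. -/
theorem theta_quot_vanish {H : Type*} [Group H] (ω : H → H → H → ℂ)
    (habs : ∀ a b c : H, ‖ω a b c‖ = 1)
    (hcoc : ∀ a b c d : H,
      ω a b c * ω a (b * c) d * ω b c d = ω (a * b) c d * ω a b (c * d))
    (hnorm : ∀ g h : H, ω g 1 h = 1)
    (X B : Subgroup H)
    (hconj : ∀ x ∈ X, ∀ b ∈ B, x⁻¹ * b * x ∈ B ∧ x * b * x⁻¹ ∈ B)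
    (hBX : ∀ j : H, ∀ b ∈ B, ∀ x ∈ X, theta ω j b x = 1)
    (hXB : ∀ j : H, ∀ x ∈ X, ∀ b ∈ B, theta ω j x b = 1)
    (hBB : ∀ j : H, ∀ b ∈ B, ∀ b' ∈ B, theta ω j b b' = 1) :
    ∀ j : H, ∀ x ∈ X, ∀ y ∈ X, ∀ b ∈ B, ∀ c ∈ B,
      theta ω j (x * b) c = 1 ∧ theta ω j b (y * c) = 1 :=
  theta_quot_vanish_general ω habs hcoc X B hconj hBX hXB hBB
end
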